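/- Let k ≥ 3 be an integer, t ∈ ℝ, and let u : ℝ → ℝ be k-times continuously differentiable and 1-periodic. Then u′(t) = −2√2π Σ_{n=1}^∞ n·x_n^s(t), i.e. the derivative of the input signal at time t equals −2√2π times the absolutely convergent series of n-weighted HiPPO-FouT sine coefficients at time t. -/

import Mathlib

/-!
Two integrations by parts give `c_n(f'') = (2πin)² c_n(f)` for a 1-periodic `C²` function `f`,
so its Fourier coefficients are `O(1/n²)` and its Fourier series converges to it pointwise.
Apply this to `u'`, which is `C²`, and use `c_n(u') = 2πin c_n(u)`: grouping the terms `±n`,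
`c_n(u') e_n(t) + c_{-n}(u') e_{-n}(t) = -4πn ∫_{t-1}^t u(r) sin(2πn(t-r)) dr = -2√2π n x_n^s(t)`.
-/

open Real

open Complex Function MeasureTheory intervalIntegral

theorem Function.Periodic.deriv {𝕜 F : Type*} [NontriviallyNormedField 𝕜] [NormedAddCommGroup F]
    [NormedSpace 𝕜 F] {f : 𝕜 → F} {c : 𝕜} (hf : Periodic f c) : Periodic (_root_.deriv f) c :=
  fun x => by rw [← deriv_comp_add_const, hf.funext]

section

variable {T : ℝ}

theorem fourier_sub_fourier_neg (n : ℤ) (y : ℝ) :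
    fourier n (y : AddCircle T) - fourier (-n) (y : AddCircle T) =
      2 * I * Real.sin (2 * π * n * y / T) := by
  have hpos : 2 * π * I * n * y / T = (2 * π * n * y / T : ℝ) * I := by push_cast; ring
  have hneg : 2 * π * I * ((-n : ℤ) : ℂ) * y / T = -(2 * π * n * y / T : ℝ) * I := by
    push_cast; ring
  rw [fourier_coe_apply, fourier_coe_apply, hpos, hneg, ofReal_sin, Complex.sin]
  linear_combination (Complex.exp ((2 * π * n * y / T : ℝ) * I) -
    Complex.exp (-(2 * π * n * y / T : ℝ) * I)) * I_sq

variable [hT : Fact (0 < T)]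

-- The boundary term of the integration by parts vanishes by periodicity, also for `n = 0`.
theorem fourierCoeff_lift_of_hasDerivAt {f f' : ℝ → ℂ} (hf : Periodic f T) (hf' : Periodic f' T)
    (hd : ∀ x, HasDerivAt f (f' x) x) (hc : Continuous f') (n : ℤ) :
    fourierCoeff hf'.lift n = 2 * π * I * n / T * fourierCoeff hf.lift n := by
  have hfourier : Continuous fun x : ℝ => fourier (-n) (x : AddCircle T) :=
    (map_continuous _).comp (AddCircle.continuous_mk' T)
  have ibp := integral_mul_deriv_eq_deriv_mul (a := 0) (b := T)
    (fun x _ => hasDerivAt_fourier_neg T n x) (fun x _ => hd x)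
    ((continuous_const.mul hfourier).intervalIntegrable _ _) (hc.intervalIntegrable _ _)
  simp only [fourierCoeff_eq_intervalIntegral _ n 0, zero_add, Periodic.lift_coe, smul_eq_mul, ibp]
  have hconst : ∫ x in (0 : ℝ)..T, -2 * π * I * n / T * fourier (-n) (x : AddCircle T) * f x =
      -2 * π * I * n / T * ∫ x in (0 : ℝ)..T, fourier (-n) (x : AddCircle T) * f x := by
    rw [← intervalIntegral.integral_const_mul]
    simp_rw [mul_assoc]
  rw [AddCircle.coe_period, ← QuotientAddGroup.mk_zero, ← hf 0, zero_add, sub_self, zero_sub,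
    hconst, real_smul, real_smul]
  ring

theorem norm_fourierCoeff_le (F : C(AddCircle T, ℂ)) (n : ℤ) : ‖fourierCoeff F n‖ ≤ ‖F‖ := by
  have hbound : ∀ x, ‖fourier (-n) x • F x‖ ≤ ‖F‖ := fun x => by
    rw [smul_eq_mul, norm_mul, show ‖fourier (-n) x‖ = 1 from Circle.norm_coe _, one_mul]
    exact F.norm_coe_le_norm x
  unfold fourierCoeff
  simpa using norm_integral_le_of_norm_le_const (μ := AddCircle.haarAddCircle)
    (Filter.Eventually.of_forall hbound)

theorem summable_fourierCoeff_lift_of_contDiff {f : ℝ → ℂ} (hf : ContDiff ℝ 2 f)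
    (hp : Periodic f T) : Summable (fourierCoeff hp.lift) := by
  have hf' : ContDiff ℝ 1 (deriv f) := hf.deriv' (n := 1)
  have hp' := hp.deriv
  have hp'' := hp'.deriv
  have hc'' : Continuous (deriv (deriv f)) := hf'.continuous_deriv le_rfl
  have hcoeff n : fourierCoeff hp''.lift n = (2 * π * I * n / T) ^ 2 * fourierCoeff hp.lift n := by
    rw [fourierCoeff_lift_of_hasDerivAt hp' hp''
        (fun x => (hf'.differentiable one_ne_zero x).hasDerivAt) hc'',
      fourierCoeff_lift_of_hasDerivAt hp hp'
        (fun x => (hf.differentiable two_ne_zero x).hasDerivAt) hf'.continuous]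
    ring
  let F'' : C(AddCircle T, ℂ) := ⟨hp''.lift, continuous_coinduced_dom.mpr hc''⟩
  have hdecay n (hn : n ≠ 0) :
      ‖fourierCoeff hp.lift n‖ ≤ ‖F''‖ * (T / (2 * π)) ^ 2 * (1 / (n : ℝ) ^ 2) := by
    have h := norm_fourierCoeff_le F'' n
    have hnorm : ‖(2 * π * I * n / T : ℂ)‖ ^ 2 = (2 * π * n / T) ^ 2 := by
      simp [div_pow, mul_pow, abs_of_pos pi_pos, abs_of_pos hT.out]
    rw [ContinuousMap.coe_mk, hcoeff, norm_mul, norm_pow, hnorm] at h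
    have hn' : (n : ℝ) ≠ 0 := by exact_mod_cast hn
    have hT0 : T ≠ 0 := hT.out.ne'
    calc ‖fourierCoeff hp.lift n‖
        = (2 * π * n / T) ^ 2 * ‖fourierCoeff hp.lift n‖ *
            ((T / (2 * π)) ^ 2 * (1 / (n : ℝ) ^ 2)) := by
          field_simp
      _ ≤ ‖F''‖ * (T / (2 * π)) ^ 2 * (1 / (n : ℝ) ^ 2) := by
          rw [mul_assoc ‖F''‖]; gcongr
  refine .of_norm_bounded_eventually
    ((summable_one_div_int_pow.mpr one_lt_two).mul_left (‖F''‖ * (T / (2 * π)) ^ 2)) ?_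
  filter_upwards [Filter.eventually_cofinite_ne 0] with n hn using hdecay n hn

theorem hasSum_fourier_series_of_contDiff {f : ℝ → ℂ} (hf : ContDiff ℝ 2 f) (hp : Periodic f T)
    (x : ℝ) : HasSum (fun n : ℤ => fourierCoeff hp.lift n * fourier n (x : AddCircle T)) (f x) :=
  has_pointwise_sum_fourier_series_of_summable
    (f := ⟨hp.lift, continuous_coinduced_dom.mpr hf.continuous⟩)
    (summable_fourierCoeff_lift_of_contDiff hf hp) x

theorem fourierCoeff_lift_mul_fourier {f : ℝ → ℂ} (hp : Periodic f T) (n : ℤ) (t : ℝ) :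
    fourierCoeff hp.lift n * fourier n (t : AddCircle T) =
      (1 / T) • ∫ r in t - T..t, fourier n ((t - r : ℝ) : AddCircle T) * f r := by
  rw [fourierCoeff_eq_intervalIntegral _ n (t - T), sub_add_cancel, smul_mul_assoc,
    ← intervalIntegral.integral_mul_const]
  congr 1
  refine integral_congr fun r _ => ?_
  simp only [Periodic.lift_coe, smul_eq_mul, fourier_coe_apply]
  rw [mul_right_comm, ← Complex.exp_add]
  congr 2
  push_cast
  ring

theorem fourierCoeff_lift_mul_fourier_sub_neg {f : ℝ → ℂ} (hp : Periodic f T) (hc : Continuous f)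
    (n : ℤ) (t : ℝ) :
    fourierCoeff hp.lift n * fourier n (t : AddCircle T) -
        fourierCoeff hp.lift (-n) * fourier (-n) (t : AddCircle T) =
      2 * I / T * ∫ r in t - T..t, f r * Real.sin (2 * π * n * (t - r) / T) := by
  have hint (m : ℤ) : IntervalIntegrable
      (fun r : ℝ => fourier m ((t - r : ℝ) : AddCircle T) * f r) volume (t - T) t :=
    (((map_continuous _).comp ((AddCircle.continuous_mk' T).comp
      (continuous_const.sub continuous_id))).mul hc).intervalIntegrable _ _
  rw [fourierCoeff_lift_mul_fourier, fourierCoeff_lift_mul_fourier, ← smul_sub,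
    ← integral_sub (hint n) (hint (-n)), real_smul, ← intervalIntegral.integral_const_mul,
    ← intervalIntegral.integral_const_mul]
  refine integral_congr fun r _ => ?_
  rw [← sub_mul, fourier_sub_fourier_neg]
  push_cast
  ring

theorem hasSum_sine_series_deriv {f : ℝ → ℂ} (hf : ContDiff ℝ 3 f) (hp : Periodic f T) (t : ℝ) :
    HasSum (fun n : ℕ => -(4 * π * n / T ^ 2) *
      ∫ r in t - T..t, f r * Real.sin (2 * π * n * (t - r) / T)) (deriv f t) := by
  have hf' : ContDiff ℝ 2 (deriv f) := hf.deriv'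
  have hcoeff := fourierCoeff_lift_of_hasDerivAt hp hp.deriv
    (fun x => (hf.differentiable three_ne_zero x).hasDerivAt) hf'.continuous
  have hsum := (hasSum_fourier_series_of_contDiff hf' hp.deriv t).nat_add_neg
  simp only [hcoeff 0, Int.cast_zero, mul_zero, zero_div, zero_mul, add_zero] at hsum
  convert hsum using 2 with n
  have hpair := fourierCoeff_lift_mul_fourier_sub_neg hp hf.continuous n t
  rw [hcoeff, hcoeff]
  simp only [Int.cast_natCast, Int.cast_neg] at hpair ⊢
  linear_combination (-(2 * π * I * n / T)) * hpair +
    (-(4 * π * n / T ^ 2) * ∫ r in t - T..t, f r * Real.sin (2 * π * n * (t - r) / T)) * I_sq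

end

theorem Real.hasSum_sine_series_deriv {T : ℝ} [Fact (0 < T)] {u : ℝ → ℝ} (hu : ContDiff ℝ 3 u)
    (hp : Periodic u T) (t : ℝ) :
    HasSum (fun n : ℕ => -(4 * π * n / T ^ 2) *
      ∫ r in t - T..t, u r * Real.sin (2 * π * n * (t - r) / T)) (deriv u t) := by
  have h := _root_.hasSum_sine_series_deriv (f := fun x => (u x : ℂ))
    (ofRealCLM.contDiff.comp hu) (hp.comp ((↑) : ℝ → ℂ)) t
  rw [(hu.differentiable three_ne_zero t).hasDerivAt.ofReal_comp.deriv] at h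
  refine Complex.hasSum_ofReal.mp ?_
  convert h using 2 with n
  push_cast [← intervalIntegral.integral_ofReal]
  rfl

/-- Alternative FouT construction: if `u` is `k`-times continuously differentiable
(`k ≥ 3`) and 1-periodic, then `u'(t) = −2√2π Σ_{n=1}^∞ n·x_n^s(t)`, where the series
`Σ n·x_n^s(t)` converges absolutely and
`x_n^s(t) = √2 ∫_{t-1}^t u(r) sin(2πn(t-r)) dr`. -/
theorem stmt_7 (k : ℕ) (hk : 3 ≤ k) (t : ℝ) (u : ℝ → ℝ)
    (hu : ContDiff ℝ k u) (hper : ∀ s : ℝ, u (s + 1) = u s) :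
    Summable (fun n : ℕ =>
        |(n : ℝ) * (Real.sqrt 2 * ∫ r in (t - 1)..t, u r * Real.sin (2 * π * n * (t - r)))|) ∧
    deriv u t =
      -(2 * Real.sqrt 2 * π) *
        ∑' n : ℕ,
          (n : ℝ) * (Real.sqrt 2 * ∫ r in (t - 1)..t, u r * Real.sin (2 * π * n * (t - r))) := by
  have hsine := Real.hasSum_sine_series_deriv (T := 1) (hu.of_le (by exact_mod_cast hk)) hper t
  simp only [one_pow, div_one] at hsine
  have hsum : HasSum (fun n : ℕ =>
      (n : ℝ) * (√2 * ∫ r in (t - 1)..t, u r * Real.sin (2 * π * n * (t - r))))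
      (-(√2 / (4 * π)) * deriv u t) := by
    refine (hsine.mul_left (-(√2 / (4 * π)))).congr_fun fun n => ?_
    field_simp
  refine ⟨summable_abs_iff.mpr hsum.summable, ?_⟩
  rw [hsum.tsum_eq]
  field_simp
  rw [Real.sq_sqrt zero_le_two]
  ring
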